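/- Main monotonic improvement bound, KL-budget form (Theorem 4, 1/(4C_K) branch): Let π_K and π_{K+1} be policies of a finite MDP with π_K(s,a) > 0 for all s, a, and suppose there is C > 0 with max_{s∈S} D_KL(π_{K+1}(s,·) ‖ π_K(s,·)) ≤ 2C. Let A = A^{π_{K+1}}_{π_K, d^{π_K}}, assume A ≥ 0, set ζ = (1−γ)³·A / (8γC), assume ζ ≤ 1, and define π̃(s,a) = ζ·π_{K+1}(s,a) + (1−ζ)·π_K(s,a). Then J^{π̃} − J^{π_K} ≥ ((1−γ)³·A² / (4γ)) · (1/(4C)). -/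

import Mathlib

open Finset

/-- A finite Markov decision process with bounded rewards and discount `γ ∈ (0,1)`. -/
structure FiniteMDP (S A : Type) [Fintype S] [Fintype A] : Type where
  P : S → A → S → ℝ
  r : S → A → ℝ
  γ : ℝ
  s0 : S
  P_nonneg : ∀ s a s', 0 ≤ P s a s'
  P_sum_one : ∀ s a, ∑ s', P s a s' = 1
  r_bound : ∀ s a, |r s a| ≤ 1
  γ_pos : 0 < γ
  γ_lt_one : γ < 1

variable {S A : Type} [Fintype S] [Fintype A] [DecidableEq S]

/-- `π` is a (stochastic) policy. -/
def IsPolicy (π : S → A → ℝ) : Prop :=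
  (∀ s a, 0 ≤ π s a) ∧ ∀ s, ∑ a, π s a = 1

/-- `Q` satisfies the Bellman equation of policy `π`. -/
def IsQ (M : FiniteMDP S A) (π Q : S → A → ℝ) : Prop :=
  ∀ s a, Q s a = M.r s a + M.γ * ∑ s', M.P s a s' * ∑ a', π s' a' * Q s' a'

/-- `d` is the discounted state (occupancy) distribution of policy `π`. -/
def IsD (M : FiniteMDP S A) (π : S → A → ℝ) (d : S → ℝ) : Prop :=
  ∀ s', d s' = (1 - M.γ) * (if s' = M.s0 then (1 : ℝ) else 0)
      + M.γ * ∑ s, d s * ∑ a, π s a * M.P s a s'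

/-- The normalized return `J^π = ∑_s d^π(s) ∑_a π(s,a) r(s,a)`. -/
def Jret (M : FiniteMDP S A) (π : S → A → ℝ) (d : S → ℝ) : ℝ :=
  ∑ s, d s * ∑ a, π s a * M.r s a

/-- The policy advantage function `A^{π'}_π(s) = ∑_a (π'(s,a) − π(s,a)) Q_π(s,a)`. -/
def polAdv (π' π Q : S → A → ℝ) (s : S) : ℝ :=
  ∑ a, (π' s a - π s a) * Q s a

/-- The expected policy advantage `A^{π'}_{π,d}`. -/
def expPolAdv (π' π Q : S → A → ℝ) (d : S → ℝ) : ℝ :=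
  ∑ s, d s * polAdv π' π Q s

/-- `δ(π',π) = max_s ∑_a |π'(s,a) − π(s,a)|`. -/
noncomputable def polDist (π' π : S → A → ℝ) : ℝ :=
  ⨆ s : S, ∑ a, |π' s a - π s a|

/-- `ΔA^{π'}_π = max_{s,s'} |A^{π'}_π(s) − A^{π'}_π(s')|`. -/
noncomputable def advRange (π' π Q : S → A → ℝ) : ℝ :=
  ⨆ p : S × S, |polAdv π' π Q p.1 - polAdv π' π Q p.2|

/-- Kullback–Leibler divergence between probability vectors on a finite set. -/
noncomputable def KLdiv {B : Type} [Fintype B] (p q : B → ℝ) : ℝ :=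
  ∑ a ∈ Finset.univ.filter (fun a => 0 < p a), p a * Real.log (p a / q a)

/-!
Pinsker's inequality turns the KL budget into the bound `δ ≤ 2 √C` on the largest per-state
`ℓ¹` distance `δ` between `π_{K+1}` and `π_K`. By the performance difference lemma, the gain of
the mixture `π̃` is `ζ` times the advantage of `π_{K+1}` averaged over `d^{π̃}`. Replacing
`d^{π̃}` by `d^{π_K}` costs at most `‖d^{π̃} - d^{π_K}‖₁ · δ / (1 - γ)`, and since both occupancy
measures are fixed points of `γ`-discounted stochastic kernels whose rows differ by at most `ζ δ`,
`(1 - γ) ‖d^{π̃} - d^{π_K}‖₁ ≤ γ ζ δ`. Hence `J^{π̃} - J^{π_K} ≥ ζ A - ζ² γ δ² / (1 - γ)²`, and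
for the chosen `ζ` the right-hand side is `(1 + γ)` times the claimed bound.
-/

section
open Real

lemma mul_log_add_sub_mul_le_mul_log_div {p q c : ℝ} (hp : 0 ≤ p) (hq : 0 < q) (hc : 0 < c) :
    p * log c + (p - q * c) ≤ p * log (p / q) := by
  rcases hp.eq_or_lt with rfl | hp
  · nlinarith
  have h := one_sub_inv_le_log_of_pos (div_pos hp (mul_pos hq hc))
  rw [log_div hp.ne' (mul_pos hq hc).ne', log_mul hq.ne' hc.ne', inv_div] at h
  rw [log_div hp.ne' hq.ne']
  have : p * (1 - q * c / p) = p - q * c := by field_simp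
  nlinarith

/-- The log-sum inequality. -/
lemma sum_mul_log_sum_div_le_sum_mul_log_div {B : Type*} (T : Finset B) {p q : B → ℝ}
    (hp : ∀ a ∈ T, 0 ≤ p a) (hq : ∀ a ∈ T, 0 < q a) :
    (∑ a ∈ T, p a) * log ((∑ a ∈ T, p a) / ∑ a ∈ T, q a) ≤ ∑ a ∈ T, p a * log (p a / q a) := by
  rcases (sum_nonneg hp).eq_or_lt with hP | hP
  · rw [← hP, zero_mul]
    refine (sum_eq_zero fun a ha => ?_).ge
    rw [(sum_eq_zero_iff_of_nonneg hp).1 hP.symm a ha, zero_mul]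
  obtain ⟨a₀, ha₀, -⟩ := exists_ne_zero_of_sum_ne_zero hP.ne'
  have hQ : 0 < ∑ a ∈ T, q a := sum_pos hq ⟨a₀, ha₀⟩
  calc (∑ a ∈ T, p a) * log ((∑ a ∈ T, p a) / ∑ a ∈ T, q a)
      = ∑ a ∈ T, (p a * log ((∑ a ∈ T, p a) / ∑ a ∈ T, q a)
          + (p a - q a * ((∑ a ∈ T, p a) / ∑ a ∈ T, q a))) := by
        rw [sum_add_distrib, sum_sub_distrib, ← sum_mul, ← sum_mul,
          mul_div_cancel₀ _ hQ.ne', sub_self, add_zero]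
    _ ≤ ∑ a ∈ T, p a * log (p a / q a) :=
        sum_le_sum fun a ha =>
          mul_log_add_sub_mul_le_mul_log_div (hp a ha) (hq a ha) (div_pos hP hQ)

/-- For `x ∈ (0, 1)`, this is `kl(p ‖ x) - 2 (p - x) ^ 2`, with `kl` the binary KL divergence. -/
noncomputable def binaryPinskerGap (p x : ℝ) : ℝ :=
  p * log p - p * log x + ((1 - p) * log (1 - p) - (1 - p) * log (1 - x)) - 2 * (p - x) ^ 2

lemma binaryPinskerGap_one_sub (p x : ℝ) :
    binaryPinskerGap (1 - p) (1 - x) = binaryPinskerGap p x := by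
  simp only [binaryPinskerGap, sub_sub_cancel]
  ring

lemma hasDerivAt_binaryPinskerGap (p : ℝ) {x : ℝ} (hx₀ : 0 < x) (hx₁ : x < 1) :
    HasDerivAt (binaryPinskerGap p) ((x - p) * (1 / (x * (1 - x)) - 4)) x := by
  have hx₁' : 1 - x ≠ 0 := by linarith
  have hlog₁ : HasDerivAt (fun y => log (1 - y)) (-1 / (1 - x)) x := by
    simpa using ((hasDerivAt_id' x).const_sub 1).log hx₁'
  have h := (((hasDerivAt_log hx₀.ne').const_mul p).const_sub (p * log p)).add
    ((hlog₁.const_mul (1 - p)).const_sub ((1 - p) * log (1 - p))) |>.sub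
    ((((hasDerivAt_id' x).const_sub p).pow 2).const_mul 2)
  refine (h : HasDerivAt (binaryPinskerGap p) _ x).congr_deriv ?_
  field_simp
  ring

lemma binaryPinskerGap_nonneg_of_le {p x : ℝ} (hp : 0 < p) (hpx : p ≤ x) (hx : x < 1) :
    0 ≤ binaryPinskerGap p x := by
  have hderiv : ∀ y ∈ Set.Icc p x, HasDerivAt (binaryPinskerGap p)
      ((y - p) * (1 / (y * (1 - y)) - 4)) y :=
    fun y hy => hasDerivAt_binaryPinskerGap p (hp.trans_le hy.1) (hy.2.trans_lt hx)
  have hmono : MonotoneOn (binaryPinskerGap p) (Set.Icc p x) := by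
    refine monotoneOn_of_deriv_nonneg (convex_Icc p x)
      (fun y hy => (hderiv y hy).continuousAt.continuousWithinAt) ?_ ?_ <;> rw [interior_Icc]
    · exact fun y hy =>
        (hderiv y (Set.Ioo_subset_Icc_self hy)).differentiableAt.differentiableWithinAt
    · intro y hy
      have hy₀ : 0 < y := hp.trans hy.1
      have hy₁ : y < 1 := hy.2.trans hx
      rw [(hderiv y (Set.Ioo_subset_Icc_self hy)).deriv]
      refine mul_nonneg (by linarith [hy.1]) ?_
      rw [sub_nonneg, le_div_iff₀ (by nlinarith)]
      nlinarith [sq_nonneg (2 * y - 1)]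
  have h := hmono (Set.left_mem_Icc.2 hpx) (Set.right_mem_Icc.2 hpx) hpx
  rwa [show binaryPinskerGap p p = 0 by simp [binaryPinskerGap]] at h

lemma binaryPinskerGap_nonneg {p x : ℝ} (hp : p ∈ Set.Icc 0 1) (hx : x ∈ Set.Ioo 0 1) :
    0 ≤ binaryPinskerGap p x := by
  have hinterior : ∀ p ∈ Set.Ioo (0 : ℝ) 1, 0 ≤ binaryPinskerGap p x := by
    intro p hp
    rcases le_total p x with hpx | hxp
    · exact binaryPinskerGap_nonneg_of_le hp.1 hpx hx.2
    · rw [← binaryPinskerGap_one_sub]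
      exact binaryPinskerGap_nonneg_of_le (by linarith [hp.2]) (by linarith) (by linarith [hx.1])
  have hcont : Continuous fun p => binaryPinskerGap p x := by
    have h₁ : Continuous fun p : ℝ => 1 - p := continuous_const.sub continuous_id
    exact ((continuous_mul_log.sub (continuous_id.mul continuous_const)).add
      ((continuous_mul_log.comp h₁).sub (h₁.mul continuous_const))).sub (by fun_prop)
  rw [← closure_Ioo zero_ne_one] at hp
  exact closure_minimal (t := {p | 0 ≤ binaryPinskerGap p x}) hinterior
    (isClosed_le continuous_const hcont) hp

lemma mul_log_div_eq_sub {p q : ℝ} (hq : q ≠ 0) : p * log (p / q) = p * log p - p * log q := by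
  rcases eq_or_ne p 0 with rfl | hp
  · simp
  · rw [log_div hp hq, mul_sub]

lemma binary_pinsker {p q : ℝ} (hp : p ∈ Set.Icc 0 1) (hq : q ∈ Set.Icc 0 1)
    (h₀ : q = 0 → p = 0) (h₁ : q = 1 → p = 1) :
    2 * (p - q) ^ 2 ≤ p * log (p / q) + (1 - p) * log ((1 - p) / (1 - q)) := by
  rcases hq.1.eq_or_lt with rfl | hq₀
  · simp [h₀ rfl]
  rcases hq.2.eq_or_lt with rfl | hq₁
  · simp [h₁ rfl]
  have h := binaryPinskerGap_nonneg hp ⟨hq₀, hq₁⟩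
  rw [binaryPinskerGap] at h
  rw [mul_log_div_eq_sub hq₀.ne', mul_log_div_eq_sub (by linarith)]
  linarith

lemma KLdiv_eq_sum {B : Type} [Fintype B] {p : B → ℝ} (hp : ∀ a, 0 ≤ p a) (q : B → ℝ) :
    KLdiv p q = ∑ a, p a * log (p a / q a) :=
  sum_filter_of_ne fun a _ h => (hp a).lt_of_ne (left_ne_zero_of_mul h).symm

lemma eq_empty_of_sum_eq_zero_of_pos {B : Type*} {T : Finset B} {q : B → ℝ}
    (hq : ∀ a ∈ T, 0 < q a) (h : ∑ a ∈ T, q a = 0) : T = ∅ :=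
  not_nonempty_iff_eq_empty.1 fun hT => (sum_pos hq hT).ne' h

/-- Pinsker's inequality. It reduces to `binary_pinsker` by the log-sum inequality on
`{a | q a < p a}` and on its complement. -/
theorem sq_sum_abs_sub_le_two_mul_KLdiv {B : Type} [Fintype B] {p q : B → ℝ}
    (hp₀ : ∀ a, 0 ≤ p a) (hq₀ : ∀ a, 0 < q a) (hp₁ : ∑ a, p a = 1) (hq₁ : ∑ a, q a = 1) :
    (∑ a, |p a - q a|) ^ 2 ≤ 2 * KLdiv p q := by
  classical
  set E := univ.filter fun a => q a < p a
  set F := univ.filter fun a => ¬ q a < p a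
  have hsplit (f : B → ℝ) : ∑ a ∈ E, f a + ∑ a ∈ F, f a = ∑ a, f a :=
    sum_filter_add_sum_filter_not _ _ _
  have hpc : ∑ a ∈ F, p a = 1 - ∑ a ∈ E, p a := by linarith [hsplit p]
  have hqc : ∑ a ∈ F, q a = 1 - ∑ a ∈ E, q a := by linarith [hsplit q]
  have hL1 : ∑ a, |p a - q a| = 2 * (∑ a ∈ E, p a - ∑ a ∈ E, q a) := by
    have hE : ∀ a ∈ E, |p a - q a| = p a - q a :=
      fun a ha => abs_of_pos (sub_pos.2 (mem_filter.1 ha).2)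
    have hF : ∀ a ∈ F, |p a - q a| = -(p a - q a) :=
      fun a ha => abs_of_nonpos (sub_nonpos.2 (not_lt.1 (mem_filter.1 ha).2))
    rw [← hsplit, sum_congr rfl hE, sum_congr rfl hF, sum_neg_distrib, sum_sub_distrib,
      sum_sub_distrib, hpc, hqc]
    ring
  have hKL : (∑ a ∈ E, p a) * log ((∑ a ∈ E, p a) / ∑ a ∈ E, q a)
      + (1 - ∑ a ∈ E, p a) * log ((1 - ∑ a ∈ E, p a) / (1 - ∑ a ∈ E, q a)) ≤ KLdiv p q := by
    rw [KLdiv_eq_sum hp₀, ← hsplit, ← hpc, ← hqc]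
    exact add_le_add
      (sum_mul_log_sum_div_le_sum_mul_log_div E (fun a _ => hp₀ a) fun a _ => hq₀ a)
      (sum_mul_log_sum_div_le_sum_mul_log_div F (fun a _ => hp₀ a) fun a _ => hq₀ a)
  have hpF : 0 ≤ ∑ a ∈ F, p a := sum_nonneg fun a _ => hp₀ a
  have hqF : 0 ≤ ∑ a ∈ F, q a := sum_nonneg fun a _ => (hq₀ a).le
  have hbin := binary_pinsker (p := ∑ a ∈ E, p a) (q := ∑ a ∈ E, q a)
    ⟨sum_nonneg fun a _ => hp₀ a, by linarith⟩
    ⟨sum_nonneg fun a _ => (hq₀ a).le, by linarith⟩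
    (fun h => by rw [eq_empty_of_sum_eq_zero_of_pos (fun a _ => hq₀ a) h, sum_empty])
    (fun h => by
      have hF : F = ∅ := eq_empty_of_sum_eq_zero_of_pos (fun a _ => hq₀ a) (by linarith)
      rw [hF, sum_empty] at hpc
      linarith)
  rw [hL1]
  linarith

end

lemma abs_sum_mul_le {ι : Type*} [Fintype ι] {w x : ι → ℝ} {B : ℝ} (hw₀ : ∀ i, 0 ≤ w i)
    (hw₁ : ∑ i, w i = 1) (hx : ∀ i, |x i| ≤ B) : |∑ i, w i * x i| ≤ B :=
  calc |∑ i, w i * x i| ≤ ∑ i, w i * B :=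
        (abs_sum_le_sum_abs _ _).trans <| sum_le_sum fun i _ => by
          rw [abs_mul, abs_of_nonneg (hw₀ i)]; exact mul_le_mul_of_nonneg_left (hx i) (hw₀ i)
    _ = B := by rw [← sum_mul, hw₁, one_mul]

lemma one_sub_mul_sum_le_sum_of_le_discounted {ι : Type*} [Fintype ι] {K : ι → ι → ℝ}
    (hK : ∀ i, ∑ j, K i j = 1) {γ : ℝ} {u b : ι → ℝ}
    (h : ∀ j, u j ≤ γ * ∑ i, u i * K i j + b j) : (1 - γ) * ∑ i, u i ≤ ∑ j, b j := by
  have hsum := sum_le_sum fun j (_ : j ∈ univ) => h j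
  rw [sum_add_distrib, ← mul_sum, sum_comm] at hsum
  simp only [← mul_sum, hK, mul_one] at hsum
  linarith


section
omit [Fintype S] [DecidableEq S]

lemma polDist_nonneg (π' π : S → A → ℝ) : 0 ≤ polDist π' π :=
  Real.iSup_nonneg fun _ => sum_nonneg fun _ _ => abs_nonneg _

lemma IsPolicy.mix {π' π πt : S → A → ℝ} {ζ : ℝ} (hπ' : IsPolicy π') (hπ : IsPolicy π)
    (hζ₀ : 0 ≤ ζ) (hζ₁ : ζ ≤ 1) (hmix : ∀ s a, πt s a = ζ * π' s a + (1 - ζ) * π s a) :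
    IsPolicy πt := by
  refine ⟨fun s a => ?_, fun s => ?_⟩
  · rw [hmix]
    have := hπ'.1 s a
    have := hπ.1 s a
    positivity
  · simp only [hmix, sum_add_distrib, ← mul_sum, hπ'.2 s, hπ.2 s]
    ring

lemma polAdv_mix {π' π πt : S → A → ℝ} {ζ : ℝ}
    (hmix : ∀ s a, πt s a = ζ * π' s a + (1 - ζ) * π s a) (Q : S → A → ℝ) (s : S) :
    polAdv πt π Q s = ζ * polAdv π' π Q s := by
  simp only [polAdv, hmix, mul_sum]
  exact sum_congr rfl fun a _ => by ring

lemma polDist_mix {π' π πt : S → A → ℝ} {ζ : ℝ} (hζ₀ : 0 ≤ ζ)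
    (hmix : ∀ s a, πt s a = ζ * π' s a + (1 - ζ) * π s a) :
    polDist πt π = ζ * polDist π' π := by
  simp only [polDist, Real.mul_iSup_of_nonneg hζ₀, mul_sum, hmix]
  congr! 3 with s a
  rw [show ζ * π' s a + (1 - ζ) * π s a - π s a = ζ * (π' s a - π s a) by ring, abs_mul,
    abs_of_nonneg hζ₀]

end

section
omit [DecidableEq S]

lemma sum_abs_sub_le_polDist (π' π : S → A → ℝ) (s : S) :
    ∑ a, |π' s a - π s a| ≤ polDist π' π :=
  le_ciSup (f := fun s => ∑ a, |π' s a - π s a|) (Finite.bddAbove_range _) s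

lemma polDist_sq_le_two_mul_iSup_KLdiv {π' π : S → A → ℝ} (hπ' : IsPolicy π') (hπ : IsPolicy π)
    (hπ_pos : ∀ s a, 0 < π s a) : polDist π' π ^ 2 ≤ 2 * ⨆ s, KLdiv (π' s) (π s) := by
  have hpinsker s : (∑ a, |π' s a - π s a|) ^ 2 ≤ 2 * ⨆ s, KLdiv (π' s) (π s) :=
    (sq_sum_abs_sub_le_two_mul_KLdiv (hπ'.1 s) (hπ_pos s) (hπ'.2 s) (hπ.2 s)).trans
      (by gcongr; exact le_ciSup (f := fun s => KLdiv (π' s) (π s)) (Finite.bddAbove_range _) s)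
  have hsup_nonneg : 0 ≤ 2 * ⨆ s, KLdiv (π' s) (π s) := by
    refine mul_nonneg zero_le_two (Real.iSup_nonneg fun s => ?_)
    nlinarith [sq_sum_abs_sub_le_two_mul_KLdiv (hπ'.1 s) (hπ_pos s) (hπ'.2 s) (hπ.2 s)]
  refine (Real.le_sqrt (polDist_nonneg π' π) hsup_nonneg).1
    (Real.iSup_le (fun s => ?_) (by positivity))
  exact (le_abs_self _).trans (Real.abs_le_sqrt (hpinsker s))

lemma abs_le_norm_apply_apply (Q : S → A → ℝ) (s : S) (a : A) : |Q s a| ≤ ‖Q‖ :=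
  (norm_le_pi_norm (Q s) a).trans (norm_le_pi_norm Q s)

lemma abs_polAdv_le (π' π Q : S → A → ℝ) (s : S) :
    |polAdv π' π Q s| ≤ polDist π' π * ‖Q‖ :=
  calc |polAdv π' π Q s| ≤ ∑ a, |π' s a - π s a| * ‖Q‖ :=
        (abs_sum_le_sum_abs _ _).trans <| sum_le_sum fun a _ => by
          rw [abs_mul]; gcongr; exact abs_le_norm_apply_apply Q s a
    _ = (∑ a, |π' s a - π s a|) * ‖Q‖ := (sum_mul _ _ _).symm
    _ ≤ polDist π' π * ‖Q‖ := by gcongr; exact sum_abs_sub_le_polDist π' π s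

lemma abs_expPolAdv_sub_le (π' π Q : S → A → ℝ) (e d : S → ℝ) :
    |expPolAdv π' π Q e - expPolAdv π' π Q d| ≤ (∑ s, |e s - d s|) * (polDist π' π * ‖Q‖) := by
  rw [expPolAdv, expPolAdv, ← sum_sub_distrib, sum_mul]
  refine (abs_sum_le_sum_abs _ _).trans (sum_le_sum fun s _ => ?_)
  rw [← sub_mul, abs_mul]
  exact mul_le_mul_of_nonneg_left (abs_polAdv_le π' π Q s) (abs_nonneg _)

lemma IsQ.norm_le {M : FiniteMDP S A} {π Q : S → A → ℝ} (hπ : IsPolicy π) (hQ : IsQ M π Q) :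
    ‖Q‖ ≤ 1 / (1 - M.γ) := by
  have hγ₀ := M.γ_pos
  have hγ₁ := M.γ_lt_one
  have hV s' : |∑ a', π s' a' * Q s' a'| ≤ ‖Q‖ :=
    abs_sum_mul_le (hπ.1 s') (hπ.2 s') (abs_le_norm_apply_apply Q s')
  have hfixed : ‖Q‖ ≤ 1 + M.γ * ‖Q‖ := by
    refine (pi_norm_le_iff_of_nonneg (by positivity)).2 fun s =>
      (pi_norm_le_iff_of_nonneg (by positivity)).2 fun a => ?_
    rw [Real.norm_eq_abs, hQ s a]
    calc _ ≤ |M.r s a| + M.γ * |∑ s', M.P s a s' * ∑ a', π s' a' * Q s' a'| := by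
          rw [← abs_of_pos hγ₀, ← abs_mul, abs_of_pos hγ₀]; exact abs_add_le _ _
      _ ≤ 1 + M.γ * ‖Q‖ := by
          gcongr
          · exact M.r_bound s a
          · exact abs_sum_mul_le (M.P_nonneg s a) (M.P_sum_one s a) hV
  rw [le_div_iff₀ (by linarith)]
  linarith

def stateKernel (M : FiniteMDP S A) (π : S → A → ℝ) (s s' : S) : ℝ :=
  ∑ a, π s a * M.P s a s'

lemma stateKernel_nonneg {M : FiniteMDP S A} {π : S → A → ℝ} (hπ : IsPolicy π) (s s' : S) :
    0 ≤ stateKernel M π s s' :=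
  sum_nonneg fun a _ => mul_nonneg (hπ.1 s a) (M.P_nonneg s a s')

lemma sum_stateKernel {M : FiniteMDP S A} {π : S → A → ℝ} (hπ : IsPolicy π) (s : S) :
    ∑ s', stateKernel M π s s' = 1 := by
  simp only [stateKernel]
  rw [sum_comm]
  simp only [← mul_sum, M.P_sum_one, mul_one, hπ.2 s]

end

section
variable {M : FiniteMDP S A}

lemma IsD.eq_stateKernel {π : S → A → ℝ} {d : S → ℝ} (hd : IsD M π d) (s' : S) :
    d s' = (1 - M.γ) * (if s' = M.s0 then 1 else 0) + M.γ * ∑ s, d s * stateKernel M π s s' :=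
  hd s'

lemma IsD.sum_eq_one {π : S → A → ℝ} {d : S → ℝ} (hπ : IsPolicy π) (hd : IsD M π d) :
    ∑ s, d s = 1 := by
  have hγ₁ := M.γ_lt_one
  have h : ∑ s, d s = (1 - M.γ) + M.γ * ∑ s, d s := by
    conv_lhs => rw [sum_congr rfl fun s' _ => hd.eq_stateKernel s']
    rw [sum_add_distrib, ← mul_sum, ← mul_sum, sum_comm]
    simp [← mul_sum, sum_stateKernel hπ]
  have : (1 - M.γ) * (∑ s, d s - 1) = 0 := by linarith
  exact sub_eq_zero.1 ((mul_eq_zero.1 this).resolve_left (by linarith))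

lemma IsD.nonneg {π : S → A → ℝ} {d : S → ℝ} (hπ : IsPolicy π) (hd : IsD M π d) (s : S) :
    0 ≤ d s := by
  have hγ₀ := M.γ_pos
  have hγ₁ := M.γ_lt_one
  have hK := stateKernel_nonneg (M := M) hπ
  -- the negative part of `d` is subinvariant, so its total mass vanishes
  have hsub (s' : S) : max (-d s') 0 ≤ M.γ * ∑ s, max (-d s) 0 * stateKernel M π s s' + 0 := by
    have hmono : ∑ s, -d s * stateKernel M π s s' ≤ ∑ s, max (-d s) 0 * stateKernel M π s s' :=
      sum_le_sum fun s _ => mul_le_mul_of_nonneg_right (le_max_left _ _) (hK s s')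
    have hrhs : 0 ≤ ∑ s, max (-d s) 0 * stateKernel M π s s' :=
      sum_nonneg fun s _ => mul_nonneg (le_max_right _ _) (hK s s')
    have hδ : 0 ≤ (1 - M.γ) * (if s' = M.s0 then (1 : ℝ) else 0) := by split_ifs <;> linarith
    simp only [neg_mul, sum_neg_distrib] at hmono
    refine max_le ?_ (by positivity)
    nlinarith [hd.eq_stateKernel s']
  have hneg := one_sub_mul_sum_le_sum_of_le_discounted (sum_stateKernel hπ) hsub
  rw [sum_const_zero] at hneg
  have hsum : ∑ s, max (-d s) 0 = 0 :=
    le_antisymm (nonpos_of_mul_nonpos_right hneg (by linarith))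
      (sum_nonneg fun s _ => le_max_right _ _)
  have := (sum_eq_zero_iff_of_nonneg fun s _ => le_max_right (-d s) 0).1 hsum s
    (mem_univ s)
  linarith [le_max_left (-d s) 0]

lemma IsD.one_sub_mul_sum_abs_sub_le {π' π : S → A → ℝ} {d' d : S → ℝ} (hπ' : IsPolicy π')
    (hπ : IsPolicy π) (hd' : IsD M π' d') (hd : IsD M π d) :
    (1 - M.γ) * ∑ s, |d' s - d s| ≤ M.γ * polDist π' π := by
  have hγ₀ := M.γ_pos
  set b : S → ℝ := fun s' => M.γ * ∑ s, d s * ∑ a, |π' s a - π s a| * M.P s a s'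
  have hsub (s' : S) :
      |d' s' - d s'| ≤ M.γ * ∑ s, |d' s - d s| * stateKernel M π' s s' + b s' := by
    have hdiff : d' s' - d s' = M.γ * (∑ s, (d' s - d s) * stateKernel M π' s s'
        + ∑ s, d s * ∑ a, (π' s a - π s a) * M.P s a s') := by
      rw [hd'.eq_stateKernel s', hd.eq_stateKernel s']
      simp only [stateKernel, sub_mul, mul_sub, sum_sub_distrib]
      ring
    rw [hdiff, abs_mul, abs_of_pos hγ₀]
    refine (mul_le_mul_of_nonneg_left ?_ hγ₀.le).trans_eq (mul_add _ _ _)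
    refine (abs_add_le _ _).trans (add_le_add ?_ ?_) <;>
      refine (abs_sum_le_sum_abs _ _).trans (sum_le_sum fun s _ => ?_)
    · rw [abs_mul, abs_of_nonneg (stateKernel_nonneg hπ' s s')]
    · rw [abs_mul, abs_of_nonneg (hd.nonneg hπ s)]
      refine mul_le_mul_of_nonneg_left ?_ (hd.nonneg hπ s)
      refine (abs_sum_le_sum_abs _ _).trans (sum_le_sum fun a _ => ?_)
      rw [abs_mul, abs_of_nonneg (M.P_nonneg s a s')]
  have hb : ∑ s', b s' ≤ M.γ * polDist π' π :=
    calc ∑ s', b s' = M.γ * ∑ s, d s * ∑ a, |π' s a - π s a| := by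
          simp only [b, ← mul_sum]
          rw [sum_comm]
          refine congrArg _ (sum_congr rfl fun s _ => ?_)
          rw [← mul_sum, sum_comm]
          simp only [← mul_sum, M.P_sum_one, mul_one]
      _ ≤ M.γ * ∑ s, d s * polDist π' π := by
          gcongr with s
          · exact hd.nonneg hπ s
          · exact sum_abs_sub_le_polDist π' π s
      _ = M.γ * polDist π' π := by rw [← sum_mul, hd.sum_eq_one hπ, one_mul]
  exact (one_sub_mul_sum_le_sum_of_le_discounted (sum_stateKernel hπ') hsub).trans hb

lemma Jret_eq_expPolAdv_add {π ρ Q : S → A → ℝ} {e : S → ℝ} (hQ : IsQ M π Q)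
    (he : IsD M ρ e) :
    Jret M ρ e = expPolAdv ρ π Q e + (1 - M.γ) * ∑ a, π M.s0 a * Q M.s0 a := by
  set V : S → ℝ := fun s => ∑ a, π s a * Q s a
  have hstate (s : S) : ∑ a, ρ s a * M.r s a
      = ∑ a, ρ s a * Q s a - M.γ * ∑ s', stateKernel M ρ s s' * V s' := by
    have hr a : M.r s a = Q s a - M.γ * ∑ s', M.P s a s' * V s' := by rw [hQ s a]; ring
    simp only [hr, mul_sub, sum_sub_distrib, stateKernel, sum_mul, mul_sum]
    rw [sum_comm (s := univ (α := S))]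
    exact congrArg _ (sum_congr rfl fun a _ => sum_congr rfl fun s' _ => by ring)
  have hflow : M.γ * ∑ s, e s * ∑ s', stateKernel M ρ s s' * V s'
      = ∑ s', e s' * V s' - (1 - M.γ) * V M.s0 := by
    have h s' : M.γ * ∑ s, e s * stateKernel M ρ s s'
        = e s' - (1 - M.γ) * if s' = M.s0 then 1 else 0 := by
      linarith [he.eq_stateKernel s']
    calc _ = ∑ s', (M.γ * ∑ s, e s * stateKernel M ρ s s') * V s' := by
          simp only [mul_sum, sum_mul]
          rw [sum_comm]
          exact sum_congr rfl fun s' _ => sum_congr rfl fun s _ => by ring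
      _ = _ := by simp [h, sub_mul, sum_sub_distrib]
  have hmul (s : S) : e s * (M.γ * ∑ s', stateKernel M ρ s s' * V s')
      = M.γ * (e s * ∑ s', stateKernel M ρ s s' * V s') := mul_left_comm _ _ _
  simp only [Jret, hstate, mul_sub, sum_sub_distrib, hmul, ← mul_sum, hflow]
  simp only [expPolAdv, polAdv, V, sub_mul, sum_sub_distrib, mul_sub]
  ring

/-- The performance difference lemma. -/
theorem Jret_sub_Jret_eq_expPolAdv {π ρ Q : S → A → ℝ} {d e : S → ℝ} (hQ : IsQ M π Q)
    (hd : IsD M π d) (he : IsD M ρ e) :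
    Jret M ρ e - Jret M π d = expPolAdv ρ π Q e := by
  rw [Jret_eq_expPolAdv_add hQ he, Jret_eq_expPolAdv_add hQ hd]
  simp [expPolAdv, polAdv]

/-- The conservative policy iteration bound of Kakade and Langford. -/
theorem Jret_mix_sub_Jret_ge {π' π πt Q : S → A → ℝ} {d dt : S → ℝ} {ζ : ℝ}
    (hπ' : IsPolicy π') (hπ : IsPolicy π) (hQ : IsQ M π Q) (hd : IsD M π d)
    (hζ₀ : 0 ≤ ζ) (hζ₁ : ζ ≤ 1) (hmix : ∀ s a, πt s a = ζ * π' s a + (1 - ζ) * π s a)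
    (hdt : IsD M πt dt) :
    ζ * expPolAdv π' π Q d - ζ ^ 2 * M.γ * polDist π' π ^ 2 / (1 - M.γ) ^ 2
      ≤ Jret M πt dt - Jret M π d := by
  have hγ₀ := M.γ_pos
  have hγ₁ : 0 < 1 - M.γ := sub_pos.2 M.γ_lt_one
  set δ := polDist π' π
  have hδ : 0 ≤ δ := polDist_nonneg π' π
  have hgain : Jret M πt dt - Jret M π d = ζ * expPolAdv π' π Q dt := by
    rw [Jret_sub_Jret_eq_expPolAdv hQ hd hdt, expPolAdv, expPolAdv, mul_sum]
    exact sum_congr rfl fun s _ => by rw [polAdv_mix hmix]; ring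
  have hocc : ∑ s, |dt s - d s| ≤ M.γ * (ζ * δ) / (1 - M.γ) := by
    rw [le_div_iff₀ hγ₁, mul_comm, ← polDist_mix hζ₀ hmix]
    exact IsD.one_sub_mul_sum_abs_sub_le (hπ'.mix hπ hζ₀ hζ₁ hmix) hπ hdt hd
  have hshift : |expPolAdv π' π Q dt - expPolAdv π' π Q d|
      ≤ M.γ * (ζ * δ) / (1 - M.γ) * (δ * (1 / (1 - M.γ))) :=
    (abs_expPolAdv_sub_le π' π Q dt d).trans
      (mul_le_mul hocc (by gcongr; exact hQ.norm_le hπ) (by positivity) (by positivity))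
  rw [hgain]
  calc _ = ζ * (expPolAdv π' π Q d - M.γ * (ζ * δ) / (1 - M.γ) * (δ * (1 / (1 - M.γ)))) := by
        field_simp
    _ ≤ ζ * expPolAdv π' π Q dt := by
        gcongr
        linarith [(abs_le.1 hshift).1]

end

theorem cpp_monotonic_improvement_kl_budget_general
    {S A : Type} [Fintype S] [Fintype A] [DecidableEq S]
    (M : FiniteMDP S A) (πK1 πK Q : S → A → ℝ) (C ζ : ℝ) (πt : S → A → ℝ) (dt d : S → ℝ)
    (hπK1 : IsPolicy πK1) (hπK : IsPolicy πK) (hπKpos : ∀ s a, 0 < πK s a)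
    (hQ : IsQ M πK Q) (hd : IsD M πK d)
    (hC : 0 < C)
    (hKL : (⨆ s : S, KLdiv (πK1 s) (πK s)) ≤ 2 * C)
    (hAdv : 0 ≤ expPolAdv πK1 πK Q d)
    (hζdef : ζ = (1 - M.γ) ^ 3 * expPolAdv πK1 πK Q d / (8 * M.γ * C))
    (hζ1 : ζ ≤ 1)
    (hmix : ∀ s a, πt s a = ζ * πK1 s a + (1 - ζ) * πK s a)
    (hdt : IsD M πt dt) :
    Jret M πt dt - Jret M πK d ≥
      ((1 - M.γ) ^ 3 * (expPolAdv πK1 πK Q d) ^ 2 / (4 * M.γ)) * (1 / (4 * C)) := by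
  have hγ₀ := M.γ_pos
  have hγ₁ : 0 < 1 - M.γ := sub_pos.2 M.γ_lt_one
  set 𝔸 := expPolAdv πK1 πK Q d
  have hζ₀ : 0 ≤ ζ := hζdef ▸ by positivity
  have hδ : polDist πK1 πK ^ 2 ≤ 4 * C :=
    (polDist_sq_le_two_mul_iSup_KLdiv hπK1 hπK hπKpos).trans (by linarith)
  have hstep : ζ * 𝔸 - ζ ^ 2 * M.γ * (4 * C) / (1 - M.γ) ^ 2
      = (1 + M.γ) * ((1 - M.γ) ^ 3 * 𝔸 ^ 2 / (4 * M.γ) * (1 / (4 * C))) := by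
    rw [hζdef]
    field_simp
    ring
  calc (1 - M.γ) ^ 3 * 𝔸 ^ 2 / (4 * M.γ) * (1 / (4 * C))
      ≤ ζ * 𝔸 - ζ ^ 2 * M.γ * (4 * C) / (1 - M.γ) ^ 2 := by
        rw [hstep]
        exact le_mul_of_one_le_left (by positivity) (by linarith)
    _ ≤ ζ * 𝔸 - ζ ^ 2 * M.γ * polDist πK1 πK ^ 2 / (1 - M.γ) ^ 2 := by gcongr
    _ ≤ Jret M πt dt - Jret M πK d := Jret_mix_sub_Jret_ge hπK1 hπK hQ hd hζ₀ hζ1 hmix hdt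

/-- **Main monotonic improvement bound, KL-budget form** (Theorem 4, `1/(4C_K)` branch). -/
theorem cpp_monotonic_improvement_kl_budget
    {S A : Type} [Fintype S] [Fintype A] [DecidableEq S] [Nonempty S] [Nonempty A]
    (M : FiniteMDP S A) (πK1 πK Q : S → A → ℝ) (C ζ : ℝ) (πt : S → A → ℝ) (dt d : S → ℝ)
    (hπK1 : IsPolicy πK1) (hπK : IsPolicy πK) (hπKpos : ∀ s a, 0 < πK s a)
    (hQ : IsQ M πK Q) (hd : IsD M πK d)
    (hC : 0 < C)
    (hKL : (⨆ s : S, KLdiv (πK1 s) (πK s)) ≤ 2 * C)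
    (hAdv : 0 ≤ expPolAdv πK1 πK Q d)
    (hζdef : ζ = (1 - M.γ) ^ 3 * expPolAdv πK1 πK Q d / (8 * M.γ * C))
    (hζ1 : ζ ≤ 1)
    (hmix : ∀ s a, πt s a = ζ * πK1 s a + (1 - ζ) * πK s a)
    (hdt : IsD M πt dt) :
    Jret M πt dt - Jret M πK d ≥
      ((1 - M.γ) ^ 3 * (expPolAdv πK1 πK Q d) ^ 2 / (4 * M.γ)) * (1 / (4 * C)) :=
  cpp_monotonic_improvement_kl_budget_general M πK1 πK Q C ζ πt dt d hπK1 hπK hπKpos hQ hd hC hKL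
    hAdv hζdef hζ1 hmix hdt
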